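/- arXiv:2604.14381 — 3 statements merged into one kernel-verified Lean document; each statement's English description precedes it below -/
import Mathlib

section
/- Let n ≥ 2 and let K_n be the complete graph on n vertices. Then the Fair Cut Cover value satisfies η̄(K_n) = n/(2(n-1)) if n is even, and η̄(K_n) = (n+1)/(2n) if n is odd; moreover this optimal value is attained by the uniform distribution over indicator cuts of k-element subsets with k = n/2 (n even) or k = (n±1)/2 (n odd). -/
/-- The Fair Cut Cover value `η̄(K)` of a graph `K`: the supremum over cut
distributions `p` of the minimum edge cut probability (encoded as the supremum
of all `t` such that some cut distribution has every edge cut probability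
at least `t`). -/
noncomputable def fairCutCover {W : Type} [Fintype W] [DecidableEq W]
    (K : SimpleGraph W) : ℝ :=
  sSup {t : ℝ | ∃ p : (W → ℤˣ) → ℝ, (∀ x, 0 ≤ p x) ∧ (∑ x, p x = 1) ∧
    ∀ u v, K.Adj u v → t ≤ ∑ x, p x * (if x u ≠ x v then (1 : ℝ) else 0)}

/-- The uniform distribution over indicator cuts of `k`-element subsets of
`Fin n`: the indicator cut of `S` sends `i` to `1` if `i ∈ S` and to `-1`
otherwise. -/
noncomputable def kSubsetCutDist (n k : ℕ) : (Fin n → ℤˣ) → ℝ :=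
  fun x =>
    ((Finset.univ.filter fun S : Finset (Fin n) =>
        S.card = k ∧ ∀ a, x a = if a ∈ S then 1 else -1).card : ℝ) /
      (n.choose k : ℝ)

/-!
Identify a cut with the set `S` of vertices it sends to `1`. It separates `2 m (n - m)` ordered
pairs of vertices, where `m = #S`, and `m (n - m) ≤ k (n - k)` for every balanced `k`
(`|2k - n| ≤ 1`). Averaging over the cuts of a distribution and then over the `n (n - 1)` ordered
pairs `u ≠ v`, some edge is cut with probability at most `2 k (n - k) / (n (n - 1))`. The uniform
distribution on `k`-subsets cuts every edge with probability `2 C(n-2, k-1) / C(n, k)`, which is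
exactly this bound, and for balanced `k` it equals `n / (2 (n - 1))` resp. `(n + 1) / (2 n)`.
-/

open Finset

lemma mul_sub_le_of_balanced (m n k : ℕ) (h₁ : n ≤ 2 * k + 1) (h₂ : 2 * k ≤ n + 1) :
    (m : ℝ) * (n - m) ≤ k * (n - k) := by
  -- `4 m (n - m) = n² - (n - 2m)²`, and `n - 2m` is odd whenever `n - 2k` is nonzero.
  have hsq : ((n : ℤ) - 2 * k) ^ 2 ≤ ((n : ℤ) - 2 * m) ^ 2 := by
    rcases (by omega : (n : ℤ) - 2 * k = 0 ∨ n ≠ 2 * m) with h | h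
    · rw [h]; positivity
    · exact sq_le_sq.2 ((abs_le.2 ⟨by omega, by omega⟩).trans (Int.one_le_abs (by omega)))
  have hsq' : ((n : ℝ) - 2 * k) ^ 2 ≤ ((n : ℝ) - 2 * m) ^ 2 := by exact_mod_cast hsq
  linear_combination hsq' / 4

section Cuts

variable {W : Type*} [DecidableEq W]

def indicatorCut (S : Finset W) : W → ℤˣ := fun a => if a ∈ S then 1 else -1

lemma indicatorCut_ne_iff {S : Finset W} {i j : W} :
    indicatorCut S i ≠ indicatorCut S j ↔ ¬(i ∈ S ↔ j ∈ S) := by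
  by_cases hi : i ∈ S <;> by_cases hj : j ∈ S <;> simp [indicatorCut, hi, hj]

variable [Fintype W]

def indicatorCutEquiv : Finset W ≃ (W → ℤˣ) where
  toFun := indicatorCut
  invFun x := {a | x a = 1}
  left_inv S := by ext a; by_cases h : a ∈ S <;> simp [indicatorCut, h]
  right_inv x := by
    funext a
    rcases Int.units_eq_one_or (x a) with h | h <;> simp [indicatorCut, h]

lemma indicatorCut_injective : Function.Injective (indicatorCut : Finset W → W → ℤˣ) :=
  indicatorCutEquiv.injective

def edgeCutProb (p : (W → ℤˣ) → ℝ) (u v : W) : ℝ :=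
  ∑ x, p x * if x u ≠ x v then 1 else 0

lemma sum_sum_indicatorCut_ne (S : Finset W) :
    ∑ i, ∑ j, (if indicatorCut S i ≠ indicatorCut S j then (1 : ℝ) else 0) =
      2 * #S * (Fintype.card W - #S) := by
  have hsep : ∀ i j, (if indicatorCut S i ≠ indicatorCut S j then (1 : ℝ) else 0) =
      (if i ∈ S then 1 else 0) + (if j ∈ S then 1 else 0) -
        2 * (if i ∈ S then 1 else 0) * (if j ∈ S then 1 else 0) := by
    intro i j
    by_cases hi : i ∈ S <;> by_cases hj : j ∈ S <;> norm_num [indicatorCut_ne_iff, hi, hj]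
  simp only [hsep, sum_sub_distrib, sum_add_distrib, ← mul_sum, ← sum_mul, sum_const, card_univ,
    sum_boole, nsmul_eq_mul, filter_mem_eq_inter, univ_inter]
  ring

lemma sum_sum_edgeCutProb_le {p : (W → ℤˣ) → ℝ} (hp₀ : ∀ x, 0 ≤ p x) (hp₁ : ∑ x, p x = 1)
    {B : ℝ} (hB : ∀ x : W → ℤˣ, ∑ i, ∑ j, (if x i ≠ x j then (1 : ℝ) else 0) ≤ B) :
    ∑ i, ∑ j, edgeCutProb p i j ≤ B :=
  calc ∑ i, ∑ j, edgeCutProb p i j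
      = ∑ x, p x * ∑ i, ∑ j, (if x i ≠ x j then (1 : ℝ) else 0) := by
        simp only [edgeCutProb, mul_sum]
        exact (sum_comm.trans (sum_congr rfl fun _ _ => sum_comm)).symm
    _ ≤ ∑ x, p x * B := sum_le_sum fun x _ => mul_le_mul_of_nonneg_left (hB x) (hp₀ x)
    _ = B := by rw [← sum_mul, hp₁, one_mul]

lemma mul_card_le_sum_sum_edgeCutProb {p : (W → ℤˣ) → ℝ} {t : ℝ}
    (ht : ∀ u v, u ≠ v → t ≤ edgeCutProb p u v) :
    t * (Fintype.card W * (Fintype.card W - 1)) ≤ ∑ i, ∑ j, edgeCutProb p i j :=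
  calc t * (Fintype.card W * (Fintype.card W - 1))
      = ∑ i : W, ∑ _j ∈ univ.erase i, t := by
        simp only [sum_const, card_erase_of_mem (mem_univ _), card_univ, nsmul_eq_mul]
        rcases (Fintype.card W).eq_zero_or_pos with h | h
        · simp [h]
        · push_cast [Nat.cast_sub h]; ring
    _ ≤ ∑ i, ∑ j ∈ univ.erase i, edgeCutProb p i j :=
        sum_le_sum fun i _ => sum_le_sum fun j hj => ht i j (ne_of_mem_erase hj).symm
    _ = ∑ i, ∑ j, edgeCutProb p i j :=
        sum_congr rfl fun i _ => sum_erase _ (by simp [edgeCutProb])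

lemma le_of_forall_le_edgeCutProb {p : (W → ℤˣ) → ℝ} (hp₀ : ∀ x, 0 ≤ p x)
    (hp₁ : ∑ x, p x = 1) {t : ℝ} (ht : ∀ u v, u ≠ v → t ≤ edgeCutProb p u v) {k : ℕ}
    (h₁ : Fintype.card W ≤ 2 * k + 1) (h₂ : 2 * k ≤ Fintype.card W + 1)
    (hW : 2 ≤ Fintype.card W) :
    t ≤ 2 * k * (Fintype.card W - k) / (Fintype.card W * (Fintype.card W - 1)) := by
  have hpos : (0 : ℝ) < Fintype.card W * (Fintype.card W - 1) := by
    have : (2 : ℝ) ≤ Fintype.card W := by exact_mod_cast hW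
    nlinarith
  rw [le_div_iff₀ hpos]
  refine (mul_card_le_sum_sum_edgeCutProb ht).trans (sum_sum_edgeCutProb_le hp₀ hp₁ fun x => ?_)
  obtain ⟨S, rfl⟩ := indicatorCutEquiv.surjective x
  rw [show indicatorCutEquiv S = indicatorCut S from rfl, sum_sum_indicatorCut_ne]
  linarith [mul_sub_le_of_balanced #S _ _ h₁ h₂]

lemma card_filter_mem_notMem {i j : W} (hij : i ≠ j) (k : ℕ) :
    #{S : Finset W | #S = k + 1 ∧ i ∈ S ∧ j ∉ S} = (Fintype.card W - 2).choose k := by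
  have hT : #((univ.erase i).erase j) = Fintype.card W - 2 := by
    rw [card_erase_of_mem (by simp [hij.symm]), card_erase_of_mem (mem_univ i), card_univ]; rfl
  rw [← hT, ← card_powersetCard]
  refine card_nbij' (·.erase i) (insert i) ?_ ?_ ?_ ?_
  · intro S hS
    simp only [coe_filter, mem_univ, true_and, Set.mem_ofPred_eq] at hS
    simp only [mem_coe, mem_powersetCard, subset_iff, mem_erase, mem_univ, and_true]
    grind
  · intro T hT
    simp only [mem_coe, mem_powersetCard, subset_iff, mem_erase, mem_univ, and_true] at hT
    simp only [coe_filter, mem_univ, true_and, Set.mem_ofPred_eq]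
    grind
  · intro S hS
    simp only [coe_filter, mem_univ, true_and, Set.mem_ofPred_eq] at hS
    exact insert_erase hS.2.1
  · intro T hT
    simp only [mem_coe, mem_powersetCard, subset_iff, mem_erase, mem_univ, and_true] at hT
    grind

lemma card_filter_separates {i j : W} (hij : i ≠ j) (k : ℕ) :
    #{S : Finset W | #S = k + 1 ∧ ¬(i ∈ S ↔ j ∈ S)} = 2 * (Fintype.card W - 2).choose k := by
  rw [filter_congr (q := fun S => (#S = k + 1 ∧ i ∈ S ∧ j ∉ S) ∨ (#S = k + 1 ∧ j ∈ S ∧ i ∉ S))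
      (fun S _ => by tauto), filter_or, card_union_of_disjoint (disjoint_filter.2 fun _ _ => by tauto),
    card_filter_mem_notMem hij, card_filter_mem_notMem hij.symm, two_mul]

end Cuts

lemma kSubsetCutDist_indicatorCut (n k : ℕ) (S : Finset (Fin n)) :
    kSubsetCutDist n k (indicatorCut S) = if #S = k then (n.choose k : ℝ)⁻¹ else 0 := by
  have hS : ∀ T : Finset (Fin n),
      (#T = k ∧ ∀ a, indicatorCut S a = if a ∈ T then 1 else -1) ↔ T = S ∧ #S = k := fun T => by
    rw [← funext_iff, show (fun a => if a ∈ T then 1 else -1) = indicatorCut T from rfl,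
      indicatorCut_injective.eq_iff.trans eq_comm]
    exact ⟨fun h => ⟨h.2, h.2 ▸ h.1⟩, fun h => ⟨h.1 ▸ h.2, h.1⟩⟩
  by_cases h : #S = k <;> simp [kSubsetCutDist, hS, h, filter_eq']

lemma kSubsetCutDist_nonneg (n k : ℕ) (x : Fin n → ℤˣ) : 0 ≤ kSubsetCutDist n k x := by
  unfold kSubsetCutDist; positivity

lemma sum_kSubsetCutDist {n k : ℕ} (hk : k ≤ n) : ∑ x, kSubsetCutDist n k x = 1 := by
  rw [← indicatorCutEquiv.sum_comp]
  simp only [indicatorCutEquiv, Equiv.coe_fn_mk, kSubsetCutDist_indicatorCut]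
  rw [← sum_filter, sum_const, univ_filter_card_eq, card_powersetCard, card_univ,
    Fintype.card_fin, nsmul_eq_mul]
  exact mul_inv_cancel₀ (Nat.cast_ne_zero.2 (Nat.choose_pos hk).ne')

lemma edgeCutProb_kSubsetCutDist_succ {n : ℕ} {i j : Fin n} (hij : i ≠ j) (k : ℕ) :
    edgeCutProb (kSubsetCutDist n (k + 1)) i j = 2 * (n - 2).choose k / n.choose (k + 1) := by
  rw [edgeCutProb, ← indicatorCutEquiv.sum_comp]
  simp only [indicatorCutEquiv, Equiv.coe_fn_mk, kSubsetCutDist_indicatorCut, indicatorCut_ne_iff,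
    ite_mul, zero_mul]
  rw [← sum_filter, ← mul_sum, sum_boole, filter_filter, card_filter_separates hij,
    Fintype.card_fin]
  push_cast
  ring

lemma add_two_mul_add_one_mul_choose_eq (m k : ℕ) :
    (m + 2) * (m + 1) * m.choose k = (k + 1) * (m + 1 - k) * (m + 2).choose (k + 1) :=
  calc (m + 2) * (m + 1) * m.choose k
      = (m + 2).choose (k + 2) * (k + 2) * (k + 1) := by
        rw [mul_assoc, Nat.add_one_mul_choose_eq, ← mul_assoc, Nat.add_one_mul_choose_eq]
    _ = (k + 1) * (m + 1 - k) * (m + 2).choose (k + 1) := by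
        rw [Nat.choose_succ_right_eq, show m + 2 - (k + 1) = m + 1 - k by omega]
        ring

lemma edgeCutProb_kSubsetCutDist {n k : ℕ} {i j : Fin n} (hij : i ≠ j) (hk₀ : 0 < k)
    (hk : k ≤ n) :
    edgeCutProb (kSubsetCutDist n k) i j = 2 * k * (n - k) / (n * (n - 1)) := by
  obtain ⟨r, rfl⟩ : ∃ r, k = r + 1 := ⟨k - 1, by omega⟩
  obtain ⟨m, rfl⟩ : ∃ m, n = m + 2 := ⟨n - 2, by have := Fin.val_ne_of_ne hij; omega⟩
  have hid := congrArg (Nat.cast (R := ℝ)) (add_two_mul_add_one_mul_choose_eq m r)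
  push_cast [Nat.cast_sub (show r ≤ m + 1 by omega)] at hid
  have hC : ((m + 2).choose (r + 1) : ℝ) ≠ 0 := Nat.cast_ne_zero.2 (Nat.choose_pos hk).ne'
  rw [edgeCutProb_kSubsetCutDist_succ hij, Nat.add_sub_cancel]
  push_cast
  rw [div_eq_div_iff hC (by ring_nf; positivity)]
  linear_combination 2 * hid

lemma two_mul_mul_sub_div_of_balanced {n k : ℕ} (hn : 2 ≤ n) (h₁ : n ≤ 2 * k + 1)
    (h₂ : 2 * k ≤ n + 1) :
    (2 * k * (n - k) / (n * (n - 1)) : ℝ) =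
      if Even n then (n : ℝ) / (2 * ((n : ℝ) - 1)) else ((n : ℝ) + 1) / (2 * (n : ℝ)) := by
  have hn' : (2 : ℝ) ≤ n := by exact_mod_cast hn
  have hn₀ : (n : ℝ) ≠ 0 := by positivity
  have hn₁ : (n : ℝ) - 1 ≠ 0 := by linarith
  split_ifs with he
  · obtain ⟨l, rfl⟩ := he
    obtain rfl : k = l := by omega
    push_cast at hn₁ ⊢
    field_simp
    ring
  · have hodd : ((n : ℝ) - 2 * k) ^ 2 = 1 := by
      have h : (n : ℤ) - 2 * k = 1 ∨ (n : ℤ) - 2 * k = -1 := by grind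
      have h' : ((n : ℤ) - 2 * k) ^ 2 = 1 := by rcases h with h | h <;> rw [h] <;> norm_num
      exact_mod_cast h'
    rw [div_eq_div_iff (mul_ne_zero hn₀ hn₁) (mul_ne_zero two_ne_zero hn₀)]
    linear_combination (-n : ℝ) * hodd

/-- The Fair Cut Cover value of the complete graph `K_n` is
`n/(2(n-1))` for even `n` and `(n+1)/(2n)` for odd `n`, attained by the uniform
distribution over indicator cuts of `k`-element subsets with `k = n/2`
(`n` even) resp. `k = (n ± 1)/2` (`n` odd): every edge of `K_n` is cut with
exactly this probability under that distribution. -/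
theorem fairCutCover_complete_graph (n : ℕ) (hn : 2 ≤ n) :
    fairCutCover (⊤ : SimpleGraph (Fin n)) =
      (if Even n then (n : ℝ) / (2 * ((n : ℝ) - 1)) else ((n : ℝ) + 1) / (2 * (n : ℝ))) ∧
    ∀ k : ℕ, ((Even n ∧ 2 * k = n) ∨ (¬ Even n ∧ (2 * k = n + 1 ∨ 2 * k = n - 1))) →
      ∀ i j : Fin n, i ≠ j →
        (∑ x, kSubsetCutDist n k x * (if x i ≠ x j then (1 : ℝ) else 0)) =
          (if Even n then (n : ℝ) / (2 * ((n : ℝ) - 1)) else ((n : ℝ) + 1) / (2 * (n : ℝ))) := by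
  have hedge : ∀ k, n ≤ 2 * k + 1 → 2 * k ≤ n + 1 → ∀ i j : Fin n, i ≠ j →
      edgeCutProb (kSubsetCutDist n k) i j =
        if Even n then (n : ℝ) / (2 * ((n : ℝ) - 1)) else ((n : ℝ) + 1) / (2 * (n : ℝ)) :=
    fun k h₁ h₂ i j hij => by
      rw [edgeCutProb_kSubsetCutDist hij (by omega) (by omega),
        two_mul_mul_sub_div_of_balanced hn h₁ h₂]
  refine ⟨?_, fun k hk => hedge k (by grind) (by grind)⟩
  obtain ⟨h₁, h₂⟩ : n ≤ 2 * ((n + 1) / 2) + 1 ∧ 2 * ((n + 1) / 2) ≤ n + 1 := by omega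
  refine IsGreatest.csSup_eq ⟨⟨kSubsetCutDist n ((n + 1) / 2), kSubsetCutDist_nonneg n _,
    sum_kSubsetCutDist (by omega), fun u v huv => (hedge _ h₁ h₂ u v huv.ne).ge⟩, ?_⟩
  rintro t ⟨p, hp₀, hp₁, hpt⟩
  have hle := le_of_forall_le_edgeCutProb hp₀ hp₁ hpt
    (k := (n + 1) / 2) (by simpa using h₁) (by simpa using h₂) (by simpa using hn)
  rwa [Fintype.card_fin, two_mul_mul_sub_div_of_balanced hn h₁ h₂] at hle
end

section
/- For every integer n ≥ 4 there exist real numbers γ and β such that (1 - F_n(γ, β))/2 > (1/π)·arccos(-1/(n-1)), where F_n(γ, β) = -sin(4β)·sin(γ)·cos(γ)^(n-2) + (1/2)·sin(2β)²·(1 - cos(2γ)^(n-2)). Consequently, the depth-1 standard QAOA Fair Cut Cover value of the complete graph K_n strictly exceeds the value (1/π)·arccos(1/(1-n)) achieved by SDP with hyperplane rounding. -/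
/-!
Put `m = n - 2` and `y = 1 / (m + 1)`. Since `arccos (-y) = π / 2 + arcsin y`, the claim is that the
edge correlation `F` drops below `-(2 / π) * arcsin y ≈ -0.64 * y`. At `sin 2β = x` the correlation
is `x² / 2 * (1 - cos (2γ) ^ m) - 2x √(1 - x²) sin γ cos γ ^ m`, and Taylor bounds for `sin` and
`cos` turn this into a polynomial bound. Choosing `x` and `γ` proportional to `√y`, Bernoulli's
inequality makes that bound about `-0.65 * y` once `m ≥ 13`; for `2 ≤ m ≤ 12` explicit rational
values of `x` and `γ` do.
-/

open Real

/-- `F_n(γ, β)` with `m = n - 2`. -/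
noncomputable def qaoaZZ (m : ℕ) (γ β : ℝ) : ℝ :=
  -(sin (4 * β) * sin γ * cos γ ^ m) + 1 / 2 * sin (2 * β) ^ 2 * (1 - cos (2 * γ) ^ m)

lemma neg_one_le_qaoaZZ (m : ℕ) (γ β : ℝ) : -1 ≤ qaoaZZ m γ β := by
  have hprod : |sin (4 * β) * sin γ * cos γ ^ m| ≤ 1 := by
    rw [abs_mul, abs_mul, abs_pow]
    exact mul_le_one₀ (mul_le_one₀ (abs_sin_le_one _) (abs_nonneg _) (abs_sin_le_one _))
      (pow_nonneg (abs_nonneg _) _) (pow_le_one₀ (abs_nonneg _) (abs_cos_le_one _))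
  have hpow : cos (2 * γ) ^ m ≤ 1 := by
    refine (le_abs_self _).trans ?_
    rw [abs_pow]
    exact pow_le_one₀ (abs_nonneg _) (abs_cos_le_one _)
  have hsq : 0 ≤ 1 / 2 * sin (2 * β) ^ 2 * (1 - cos (2 * γ) ^ m) := by
    have := sub_nonneg.2 hpow
    positivity
  unfold qaoaZZ
  linarith [(abs_le.1 hprod).2]

lemma arcsin_le_add_cube_div_four {y : ℝ} (hy₀ : 0 < y) (hy : y ≤ 1 / 3) :
    arcsin y ≤ y + y ^ 3 / 4 := by
  have hle : y + y ^ 3 / 4 ≤ 1 := by nlinarith [pow_le_pow_left₀ hy₀.le hy 3]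
  rw [arcsin_le_iff_le_sin ⟨by linarith, by linarith⟩
    ⟨by linarith [pi_pos, pow_pos hy₀ 3], by linarith [pi_gt_three]⟩]
  have hfactor : (1 + y ^ 2 / 4) ^ 3 ≤ 3 / 2 :=
    calc (1 + y ^ 2 / 4) ^ 3 ≤ (37 / 36) ^ 3 := pow_le_pow_left₀ (by positivity) (by nlinarith) 3
      _ ≤ 3 / 2 := by norm_num
  have hcube : (y + y ^ 3 / 4) ^ 3 / 6 ≤ y ^ 3 / 4 :=
    calc (y + y ^ 3 / 4) ^ 3 / 6 = y ^ 3 * (1 + y ^ 2 / 4) ^ 3 / 6 := by ring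
      _ ≤ y ^ 3 * (3 / 2) / 6 := by gcongr
      _ = y ^ 3 / 4 := by ring
  linarith [sin_gt_sub_cube (show 0 < y + y ^ 3 / 4 by positivity)]

lemma qaoaZZ_arcsin_div_two (m : ℕ) (γ : ℝ) {x : ℝ} (hx₀ : -1 ≤ x) (hx₁ : x ≤ 1) :
    qaoaZZ m γ (arcsin x / 2) =
      x ^ 2 / 2 * (1 - cos (2 * γ) ^ m) - 2 * x * √(1 - x ^ 2) * sin γ * cos γ ^ m := by
  rw [qaoaZZ, show 4 * (arcsin x / 2) = 2 * arcsin x by ring, mul_div_cancel₀ _ two_ne_zero,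
    sin_two_mul, sin_arcsin hx₀ hx₁, cos_arcsin]
  ring

noncomputable def qaoaZZBound (m : ℕ) (x r γ : ℝ) : ℝ :=
  x ^ 2 / 2 * (1 - (1 - 2 * γ ^ 2) ^ m) - 2 * x * r * (γ - γ ^ 3 / 6) * (1 - γ ^ 2 / 2) ^ m

lemma qaoaZZ_arcsin_le_qaoaZZBound (m : ℕ) {x r γ : ℝ} (hx : 0 ≤ x) (hr : r ^ 2 ≤ 1 - x ^ 2)
    (hγ₀ : 0 < γ) (hγ₁ : 2 * γ ^ 2 ≤ 1) :
    qaoaZZ m γ (arcsin x / 2) ≤ qaoaZZBound m x r γ := by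
  have hx₁ : x ≤ 1 := by nlinarith
  rw [qaoaZZ_arcsin_div_two m γ (by linarith) hx₁, qaoaZZBound]
  have hr' : r ≤ √(1 - x ^ 2) := (le_abs_self r).trans (abs_le_sqrt hr)
  have hsin : γ - γ ^ 3 / 6 ≤ sin γ := (sin_gt_sub_cube hγ₀).le
  have hcos : 1 - γ ^ 2 / 2 ≤ cos γ := one_sub_sq_div_two_le_cos
  have hcos₂ : 1 - 2 * γ ^ 2 ≤ cos (2 * γ) := by
    linarith [one_sub_sq_div_two_le_cos (x := 2 * γ)]
  have hS : 0 ≤ γ - γ ^ 3 / 6 := by nlinarith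
  have hC : 0 ≤ 1 - γ ^ 2 / 2 := by nlinarith
  have hD : 0 ≤ 1 - 2 * γ ^ 2 := by linarith
  have hgain : 2 * x * r * (γ - γ ^ 3 / 6) * (1 - γ ^ 2 / 2) ^ m ≤
      2 * x * √(1 - x ^ 2) * sin γ * cos γ ^ m := by
    gcongr
    exact mul_nonneg (by positivity) (hS.trans hsin)
  have hloss : x ^ 2 / 2 * (1 - cos (2 * γ) ^ m) ≤ x ^ 2 / 2 * (1 - (1 - 2 * γ ^ 2) ^ m) := by
    gcongr
  linarith

lemma neg_two_div_pi_mul_arcsin_ge {y : ℝ} (hy₀ : 0 < y) (hy : y ≤ 1 / 3) :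
    -(2 / 3.14) * (y + y ^ 3 / 4) ≤ -(2 / π) * arcsin y := by
  have harcsin := arcsin_le_add_cube_div_four hy₀ hy
  have harcsin₀ : 0 ≤ arcsin y := arcsin_nonneg.2 hy₀.le
  have hpi : 2 / π ≤ 2 / 3.14 := div_le_div_of_nonneg_left zero_le_two (by norm_num) pi_gt_d2.le
  nlinarith [div_pos two_pos pi_pos]

lemma exists_qaoaZZ_lt_of_bound {m : ℕ} (x r γ : ℝ) (hm : 2 ≤ m) (hx : 0 ≤ x)
    (hr : r ^ 2 ≤ 1 - x ^ 2) (hγ₀ : 0 < γ) (hγ₁ : 2 * γ ^ 2 ≤ 1)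
    (hbound : qaoaZZBound m x r γ < -(2 / 3.14) * (1 / (m + 1) + (1 / (m + 1)) ^ 3 / 4)) :
    ∃ γ β, qaoaZZ m γ β < -(2 / π) * arcsin (1 / (m + 1)) := by
  have hy : 1 / ((m : ℝ) + 1) ≤ 1 / 3 := by
    gcongr
    exact_mod_cast Nat.succ_le_succ hm
  exact ⟨γ, arcsin x / 2, (qaoaZZ_arcsin_le_qaoaZZBound m hx hr hγ₀ hγ₁).trans_lt
    (hbound.trans_le (neg_two_div_pi_mul_arcsin_ge (by positivity) hy))⟩

lemma exists_qaoaZZ_lt_of_le {m : ℕ} (hm : 13 ≤ m) :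
    ∃ γ β, qaoaZZ m γ β < -(2 / π) * arcsin (1 / (m + 1)) := by
  set y : ℝ := 1 / (m + 1) with hy_def
  have hy₀ : 0 < y := by positivity
  have hy : y ≤ 1 / 14 := by
    rw [hy_def]
    gcongr
    exact_mod_cast Nat.succ_le_succ hm
  have hmy : m * y ≤ 1 := by
    rw [hy_def, mul_one_div, div_le_one (by positivity)]
    linarith
  have hcos : 23 / 25 ≤ (1 - 2 * y / 25) ^ m := by
    have h := one_add_mul_le_pow (a := -(2 * y / 25)) (by linarith) m
    rw [← sub_eq_add_neg] at h
    linarith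
  have hcos₂ : 17 / 25 ≤ (1 - 8 * y / 25) ^ m := by
    have h := one_add_mul_le_pow (a := -(8 * y / 25)) (by linarith) m
    rw [← sub_eq_add_neg] at h
    linarith
  set t := √y
  have ht : t ^ 2 = y := sq_sqrt hy₀.le
  refine exists_qaoaZZ_lt_of_bound (8 / 5 * t) (9 / 10) (2 / 5 * t) (by omega) (by positivity)
    (by nlinarith) (by positivity) (by nlinarith) ?_
  calc qaoaZZBound m (8 / 5 * t) (9 / 10) (2 / 5 * t)
      = y * (32 / 25 * (1 - (1 - 8 * y / 25) ^ m)
          - 144 / 125 * (1 - 2 * y / 75) * (1 - 2 * y / 25) ^ m) := by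
        rw [qaoaZZBound, ← ht]; ring
    _ ≤ y * (32 / 25 * (8 / 25) - 144 / 125 * (1 - 2 * (1 / 14) / 75) * (23 / 25)) := by
        gcongr <;> linarith
    _ < -(2 / 3.14) * (y + y ^ 3 / 4) := by nlinarith [pow_le_pow_left₀ hy₀.le hy 2]

theorem exists_qaoaZZ_lt {m : ℕ} (hm : 2 ≤ m) :
    ∃ γ β, qaoaZZ m γ β < -(2 / π) * arcsin (1 / (m + 1)) := by
  obtain hsmall | hlarge := lt_or_ge m 13
  -- Witnesses found numerically; for these `m` the Bernoulli estimates above are too lossy.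
  · interval_cases m
    · apply exists_qaoaZZ_lt_of_bound (3 / 5) (4 / 5) (11 / 25) <;> norm_num [qaoaZZBound]
    · apply exists_qaoaZZ_lt_of_bound (3 / 5) (4 / 5) (7 / 20) <;> norm_num [qaoaZZBound]
    · apply exists_qaoaZZ_lt_of_bound (2 / 5) (9 / 10) (19 / 50) <;> norm_num [qaoaZZBound]
    · apply exists_qaoaZZ_lt_of_bound (2 / 5) (9 / 10) (17 / 50) <;> norm_num [qaoaZZBound]
    · apply exists_qaoaZZ_lt_of_bound (2 / 5) (9 / 10) (3 / 10) <;> norm_num [qaoaZZBound]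
    · apply exists_qaoaZZ_lt_of_bound (2 / 5) (9 / 10) (7 / 25) <;> norm_num [qaoaZZBound]
    · apply exists_qaoaZZ_lt_of_bound (2 / 5) (9 / 10) (1 / 4) <;> norm_num [qaoaZZBound]
    · apply exists_qaoaZZ_lt_of_bound (2 / 5) (9 / 10) (23 / 100) <;> norm_num [qaoaZZBound]
    · apply exists_qaoaZZ_lt_of_bound (2 / 5) (9 / 10) (11 / 50) <;> norm_num [qaoaZZBound]
    · apply exists_qaoaZZ_lt_of_bound (2 / 5) (9 / 10) (1 / 5) <;> norm_num [qaoaZZBound]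
    · apply exists_qaoaZZ_lt_of_bound (2 / 5) (9 / 10) (19 / 100) <;> norm_num [qaoaZZBound]
  · exact exists_qaoaZZ_lt_of_le hlarge

/-- For every `n ≥ 4` there are angles `γ, β` such that the
depth-1 standard QAOA edge cut probability `(1 - F_n(γ,β))/2` on the complete
graph `K_n` strictly exceeds `arccos(-1/(n-1))/π`; consequently the depth-1
QAOA Fair Cut Cover value of `K_n` strictly exceeds the SDP-with-hyperplane-
rounding value `arccos(1/(1-n))/π`. -/
theorem qaoa_beats_sdp_hr_complete_graph (n : ℕ) (hn : 4 ≤ n) :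
    (∃ γ β : ℝ,
      (1 - (-(Real.sin (4 * β) * Real.sin γ * Real.cos γ ^ (n - 2)) +
          (1 / 2) * Real.sin (2 * β) ^ 2 * (1 - Real.cos (2 * γ) ^ (n - 2)))) / 2 >
        (1 / Real.pi) * Real.arccos (-1 / ((n : ℝ) - 1))) ∧
    (1 / Real.pi) * Real.arccos (1 / (1 - (n : ℝ))) <
      sSup {r : ℝ | ∃ γ β : ℝ, r =
        (1 - (-(Real.sin (4 * β) * Real.sin γ * Real.cos γ ^ (n - 2)) +
          (1 / 2) * Real.sin (2 * β) ^ 2 * (1 - Real.cos (2 * γ) ^ (n - 2)))) / 2} := by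
  show (∃ γ β : ℝ, (1 - qaoaZZ (n - 2) γ β) / 2 > _) ∧
    _ < sSup {r : ℝ | ∃ γ β : ℝ, r = (1 - qaoaZZ (n - 2) γ β) / 2}
  obtain ⟨γ, β, hlt⟩ := exists_qaoaZZ_lt (m := n - 2) (by omega)
  have hm : ((n - 2 : ℕ) : ℝ) + 1 = n - 1 := by
    rw [Nat.cast_sub (by omega)]
    ring
  rw [hm] at hlt
  have hcut : 1 / π * arccos (-1 / ((n : ℝ) - 1)) < (1 - qaoaZZ (n - 2) γ β) / 2 :=
    calc 1 / π * arccos (-1 / ((n : ℝ) - 1)) = (1 - -(2 / π) * arcsin (1 / (n - 1))) / 2 := by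
          rw [neg_div, arccos_neg, arccos_eq_pi_div_two_sub_arcsin]
          field_simp
          ring
      _ < (1 - qaoaZZ (n - 2) γ β) / 2 := by linarith
  have hsdp : (1 : ℝ) / (1 - n) = -1 / (n - 1) := by
    rw [← neg_sub, div_neg, neg_div]
  refine ⟨⟨γ, β, hcut⟩, hsdp ▸ lt_csSup_of_lt ⟨1, ?_⟩ ⟨γ, β, rfl⟩ hcut⟩
  rintro _ ⟨γ', β', rfl⟩
  linarith [neg_one_le_qaoaZZ (n - 2) γ' β']
end

section
/- For every integer d ≥ 2, setting x = 1/(d+1), the strict inequality x·(1-x)^d > (4/π²)·(arcsin x)² + (1/π)·(arcsin x)·(1 - (1-2x)^d) holds. -/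
/-!
With `a = arcsin x` the right-hand side is increasing in `a`, so it may be replaced by its value
at `y = x + x³/3 > arcsin x`, which leaves an inequality between polynomials in `x` and `π`.
For `d ≤ 4` it is checked numerically. For `d ≥ 5` the powers are compared with exponentials,
`(1 - x)^d ≥ e⁻¹` and `(1 - 2x)^d ≥ e⁻² (1 - 2x)`, via `log (1 - t) ≥ -t / (1 - t)`; the
inequality then reduces, up to a factor `x`, to `4c²/6 + π c (1 - 2e⁻²/3) < e⁻¹ π²` with
`c = 109/108`.
-/

open Real

theorem arcsin_lt_add_cube_div_three {x : ℝ} (hx : 0 < x) (hx2 : x ^ 2 ≤ 3 / 4) :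
    arcsin x < x + x ^ 3 / 3 := by
  have hy : 0 < x + x ^ 3 / 3 := by positivity
  -- `sin y > y - y³/6` at `y = x + x³/3`, and `y³ ≤ 2x³` because `(1 + x²/3)³ ≤ (5/4)³ < 2`.
  have hcube : (x + x ^ 3 / 3) ^ 3 ≤ 2 * x ^ 3 := by
    have : (1 + x ^ 2 / 3) ^ 3 ≤ (5 / 4) ^ 3 := by gcongr; linarith
    calc (x + x ^ 3 / 3) ^ 3 = (1 + x ^ 2 / 3) ^ 3 * x ^ 3 := by ring
      _ ≤ 2 * x ^ 3 := by gcongr; linarith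
  rw [arcsin_lt_iff_lt_sin' ⟨by linarith [pi_pos], by nlinarith [pi_gt_three]⟩]
  linarith [sin_gt_sub_cube hy]

theorem exp_neg_le_one_sub_pow {t : ℝ} (ht : t < 1) (n : ℕ) :
    exp (-(n * (t / (1 - t)))) ≤ (1 - t) ^ n := by
  have hpos : 0 < 1 - t := by linarith
  have hlog : -(t / (1 - t)) ≤ log (1 - t) := by
    have := one_sub_inv_le_log_of_pos hpos
    rwa [show 1 - (1 - t)⁻¹ = -(t / (1 - t)) by field_simp; ring] at this
  calc exp (-(n * (t / (1 - t)))) = exp (-(t / (1 - t))) ^ n := by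
        rw [← exp_nat_mul]; ring_nf
    _ ≤ exp (log (1 - t)) ^ n := by gcongr
    _ = (1 - t) ^ n := by rw [exp_log hpos]

theorem div_sq_mul_sq_add_div_mul_lt {p a y m L : ℝ} (hp : 0 < p) (ha : 0 ≤ a) (hay : a < y)
    (hm : 0 ≤ m) (h : 4 * y ^ 2 + p * y * m < L * p ^ 2) :
    4 / p ^ 2 * a ^ 2 + 1 / p * a * m < L := by
  have hlt : 4 * a ^ 2 + p * a * m < L * p ^ 2 := by
    have : p * a * m ≤ p * y * m := by gcongr
    nlinarith
  calc 4 / p ^ 2 * a ^ 2 + 1 / p * a * m = (4 * a ^ 2 + p * a * m) / p ^ 2 := by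
        field_simp
    _ < L := by rwa [div_lt_iff₀ (by positivity)]

theorem exp_neg_one_le_one_sub_pow {d : ℕ} (hd : 0 < d) {x : ℝ} (hx : x = 1 / ((d : ℝ) + 1)) :
    exp (-1) ≤ (1 - x) ^ d := by
  have hd' : (0 : ℝ) < d := by exact_mod_cast hd
  have h1x : 1 - x = d / (d + 1) := by rw [hx]; field_simp; ring
  have h : (d : ℝ) * (x / (1 - x)) = 1 := by rw [h1x, hx]; field_simp
  have hx1 : x < 1 := by linarith [show 0 < 1 - x by rw [h1x]; positivity]
  simpa [h] using exp_neg_le_one_sub_pow hx1 d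

theorem exp_neg_two_mul_le_one_sub_two_mul_pow {d : ℕ} (hd : 2 ≤ d) {x : ℝ}
    (hx : x = 1 / ((d : ℝ) + 1)) : exp (-2) * (1 - 2 * x) ≤ (1 - 2 * x) ^ d := by
  obtain ⟨k, rfl⟩ : ∃ k, d = k + 1 := ⟨d - 1, by omega⟩
  have hk : (0 : ℝ) < k := by exact_mod_cast (by omega : 0 < k)
  push_cast at hx
  have h12x : 1 - 2 * x = k / (k + 1 + 1) := by rw [hx]; field_simp; ring
  have h : (k : ℝ) * (2 * x / (1 - 2 * x)) = 2 := by rw [h12x, hx]; field_simp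
  have h2x1 : 2 * x < 1 := by linarith [show 0 < 1 - 2 * x by rw [h12x]; positivity]
  rw [pow_succ]
  gcongr
  simpa [h] using exp_neg_le_one_sub_pow h2x1 k

theorem qaoa_sdp_cubic_inequality_of_five_le {d : ℕ} (hd : 5 ≤ d) {x : ℝ}
    (hx : x = 1 / ((d : ℝ) + 1)) :
    4 * (x + x ^ 3 / 3) ^ 2 + π * (x + x ^ 3 / 3) * (1 - (1 - 2 * x) ^ d) <
      x * (1 - x) ^ d * π ^ 2 := by
  have hx0 : 0 < x := hx ▸ Nat.one_div_pos_of_nat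
  have hx6 : x ≤ 1 / 6 := by
    rw [hx]; exact (Nat.one_div_le_one_div hd).trans_eq (by norm_num)
  have hE1 : exp (-1) ≤ (1 - x) ^ d := exp_neg_one_le_one_sub_pow (by omega) hx
  have hE2 : exp (-2) * (1 - 2 * x) ≤ (1 - 2 * x) ^ d :=
    exp_neg_two_mul_le_one_sub_two_mul_pow (by omega) hx
  have hE2v : exp (-2) = exp (-1) ^ 2 := by rw [← exp_nat_mul]; norm_num
  have hc : 1 + x ^ 2 / 3 ≤ 109 / 108 := by nlinarith
  have hm : 1 - (1 - 2 * x) ^ d ≤ 1 - (2 / 3) * exp (-2) := by nlinarith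
  have hm0 : 0 ≤ 1 - (1 - 2 * x) ^ d := sub_nonneg.mpr (pow_le_one₀ (by linarith) (by linarith))
  have hnum : 4 * (109 / 108) ^ 2 / 6 + π * (109 / 108) * (1 - (2 / 3) * exp (-1) ^ 2)
      < exp (-1) * π ^ 2 := by
    nlinarith [pi_gt_d2, pi_lt_d2, exp_neg_one_gt_d9]
  calc 4 * (x + x ^ 3 / 3) ^ 2 + π * (x + x ^ 3 / 3) * (1 - (1 - 2 * x) ^ d)
      = x * (4 * (1 + x ^ 2 / 3) ^ 2 * x + π * (1 + x ^ 2 / 3) * (1 - (1 - 2 * x) ^ d)) := by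
        ring
    _ ≤ x * (4 * (109 / 108) ^ 2 / 6 + π * (109 / 108) * (1 - (2 / 3) * exp (-1) ^ 2)) := by
        rw [← hE2v]; gcongr
        calc 4 * (1 + x ^ 2 / 3) ^ 2 * x ≤ 4 * (109 / 108) ^ 2 * (1 / 6) := by gcongr
          _ = _ := by ring
    _ < x * (exp (-1) * π ^ 2) := by gcongr
    _ ≤ x * (1 - x) ^ d * π ^ 2 := by rw [mul_assoc]; gcongr

theorem qaoa_sdp_cubic_inequality {d : ℕ} (hd : 2 ≤ d) {x : ℝ} (hx : x = 1 / ((d : ℝ) + 1)) :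
    4 * (x + x ^ 3 / 3) ^ 2 + π * (x + x ^ 3 / 3) * (1 - (1 - 2 * x) ^ d) <
      x * (1 - x) ^ d * π ^ 2 := by
  rcases lt_or_ge d 5 with hsmall | hlarge
  · interval_cases d <;> norm_num [hx] <;> nlinarith [pi_gt_d2]
  · exact qaoa_sdp_cubic_inequality_of_five_le hlarge hx

/-- For every integer `d ≥ 2`, with `x = 1/(d+1)`,
`x(1-x)^d > (4/π²)(arcsin x)² + (1/π)(arcsin x)(1 - (1-2x)^d)`. -/
theorem qaoa_sdp_core_inequality (d : ℕ) (hd : 2 ≤ d) (x : ℝ)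
    (hx : x = 1 / ((d : ℝ) + 1)) :
    x * (1 - x) ^ d >
      (4 / Real.pi ^ 2) * Real.arcsin x ^ 2 +
        (1 / Real.pi) * Real.arcsin x * (1 - (1 - 2 * x) ^ d) := by
  have hx0 : 0 < x := hx ▸ Nat.one_div_pos_of_nat
  have hx3 : x ≤ 1 / 3 := by
    rw [hx]; exact (Nat.one_div_le_one_div hd).trans_eq (by norm_num)
  have hm : 0 ≤ 1 - (1 - 2 * x) ^ d := sub_nonneg.mpr (pow_le_one₀ (by linarith) (by linarith))
  exact div_sq_mul_sq_add_div_mul_lt pi_pos (arcsin_nonneg.mpr hx0.le)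
    (arcsin_lt_add_cube_div_three hx0 (by nlinarith)) hm (qaoa_sdp_cubic_inequality hd hx)
end
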